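/- arXiv:2203.09267 — 6 statements merged into one kernel-verified Lean document; each statement's English description precedes it below -/
import Mathlib

section
/- Let D be a non-trivial 2-(k², k, λ) design with λ dividing k, admitting a flag-transitive automorphism group G. Then for any point x and any block B through x, and any point y ≠ x, the size of the G_x-orbit of y equals (k+1)·|B ∩ y^{G_x}|; in particular k+1 divides the length of every G_x-orbit on points other than {x}. -/
/-!
Count the flags `(B, z)` with `x ∈ B` and `z ∈ B ∩ O`, where `O` is a `G_x`-orbit not
containing `x`. Each `z ∈ O` lies on `λ` blocks through `x`, and the same count with `O`
replaced by all points `z ≠ x` gives `r (k - 1) = (k² - 1) λ`, i.e. `r = λ (k + 1)` blocks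
through `x`. Since `G_x` is transitive on these blocks and preserves `O`, each of them meets `O`
in the same number of points. Hence `|O| λ = λ (k + 1) |B ∩ O|`.
-/

open Finset MulAction
open scoped Pointwise

section Design

variable {Pt ι : Type*} [Fintype ι] [DecidableEq Pt]

def blocksThrough (Bl : ι → Finset Pt) (x : Pt) : Finset ι := univ.filter (x ∈ Bl ·)

def IsPairBalanced (Bl : ι → Finset Pt) (lam : ℕ) : Prop :=
  ∀ x y : Pt, x ≠ y → (univ.filter fun i => x ∈ Bl i ∧ y ∈ Bl i).card = lam

variable {Bl : ι → Finset Pt} {lam : ℕ}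

theorem IsPairBalanced.sum_card_inter_blocksThrough (hpair : IsPairBalanced Bl lam) {x : Pt}
    {T : Finset Pt} (hxT : x ∉ T) :
    ∑ j ∈ blocksThrough Bl x, (Bl j ∩ T).card = T.card * lam := by
  calc ∑ j ∈ blocksThrough Bl x, (Bl j ∩ T).card
      = ∑ j ∈ blocksThrough Bl x, (T.bipartiteAbove (fun j z => z ∈ Bl j) j).card := by
        simp only [bipartiteAbove, filter_mem_eq_inter, inter_comm]
    _ = ∑ z ∈ T, ((blocksThrough Bl x).bipartiteBelow (fun j z => z ∈ Bl j) z).card :=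
        sum_card_bipartiteAbove_eq_sum_card_bipartiteBelow _
    _ = ∑ _z ∈ T, lam := by
        refine sum_congr rfl fun z hz => ?_
        unfold bipartiteBelow blocksThrough
        rw [filter_filter]
        exact hpair x z (ne_of_mem_of_not_mem hz hxT).symm
    _ = T.card * lam := by rw [sum_const, smul_eq_mul]

theorem IsPairBalanced.card_blocksThrough_mul_sub_one [Fintype Pt] (hpair : IsPairBalanced Bl lam)
    {k : ℕ} (hsz : ∀ i, (Bl i).card = k) (x : Pt) :
    (blocksThrough Bl x).card * (k - 1) = (Fintype.card Pt - 1) * lam := by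
  have hxj : ∀ j ∈ blocksThrough Bl x, (Bl j ∩ univ.erase x).card = k - 1 := fun j hj => by
    rw [inter_erase, inter_univ, card_erase_of_mem (mem_filter.mp hj).2, hsz]
  rw [← card_univ, ← card_erase_of_mem (mem_univ x),
    ← hpair.sum_card_inter_blocksThrough (notMem_erase x univ), sum_congr rfl hxj, sum_const,
    smul_eq_mul]

theorem IsPairBalanced.card_blocksThrough_of_card_eq_sq [Fintype Pt]
    (hpair : IsPairBalanced Bl lam) {k : ℕ} (hk : 1 < k) (hv : Fintype.card Pt = k ^ 2)
    (hsz : ∀ i, (Bl i).card = k) (x : Pt) :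
    (blocksThrough Bl x).card = lam * (k + 1) := by
  refine Nat.eq_of_mul_eq_mul_right (Nat.sub_pos_of_lt hk) ?_
  rw [hpair.card_blocksThrough_mul_sub_one hsz, hv, ← one_pow 2, Nat.sq_sub_sq, one_pow]
  ring

end Design

section FlagTransitive

variable {Pt ι : Type*} [DecidableEq Pt] (G : Type*) [Group G] [MulAction G Pt] [MulAction G ι]

def PreservesIncidence (Bl : ι → Finset Pt) : Prop :=
  ∀ (g : G) (i : ι) (x : Pt), x ∈ Bl i ↔ g • x ∈ Bl (g • i)

def IsFlagTransitive (Bl : ι → Finset Pt) : Prop :=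
  ∀ (x : Pt) (i : ι), x ∈ Bl i → ∀ (y : Pt) (j : ι), y ∈ Bl j →
    ∃ g : G, g • x = y ∧ g • i = j

variable {G} {Bl : ι → Finset Pt}

theorem PreservesIncidence.block_smul (hcompat : PreservesIncidence G Bl) (g : G) (i : ι) :
    Bl (g • i) = g • Bl i := by
  ext z
  rw [← inv_smul_mem_iff, hcompat g i (g⁻¹ • z), smul_inv_smul]

theorem PreservesIncidence.card_inter_smul_block (hcompat : PreservesIncidence G Bl)
    {T : Finset Pt} {g : G} (hgT : g • T = T) (i : ι) :
    (Bl (g • i) ∩ T).card = (Bl i ∩ T).card := by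
  rw [hcompat.block_smul, ← hgT, ← smul_finset_inter, card_smul_finset, hgT]

variable [Fintype ι]

theorem IsFlagTransitive.card_inter_blocksThrough_eq (hflag : IsFlagTransitive G Bl)
    (hcompat : PreservesIncidence G Bl) {x : Pt} {T : Finset Pt}
    (hT : ∀ g ∈ stabilizer G x, g • T = T) {i : ι} (hxi : x ∈ Bl i) {j : ι}
    (hj : j ∈ blocksThrough Bl x) :
    (Bl j ∩ T).card = (Bl i ∩ T).card := by
  obtain ⟨g, hgx, rfl⟩ := hflag x i hxi x j (mem_filter.mp hj).2
  exact hcompat.card_inter_smul_block (hT g hgx) i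

theorem IsFlagTransitive.card_eq_succ_mul_card_inter_block [Fintype Pt]
    (hflag : IsFlagTransitive G Bl) (hcompat : PreservesIncidence G Bl) {k lam : ℕ}
    (hpair : IsPairBalanced Bl lam) (hk : 1 < k) (hlam : 0 < lam) (hv : Fintype.card Pt = k ^ 2)
    (hsz : ∀ i, (Bl i).card = k) {x : Pt} {T : Finset Pt} (hxT : x ∉ T)
    (hT : ∀ g ∈ stabilizer G x, g • T = T) {i : ι} (hxi : x ∈ Bl i) :
    T.card = (k + 1) * (Bl i ∩ T).card := by
  refine Nat.eq_of_mul_eq_mul_right hlam ?_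
  rw [← hpair.sum_card_inter_blocksThrough hxT,
    sum_congr rfl fun j => hflag.card_inter_blocksThrough_eq hcompat hT hxi, sum_const,
    hpair.card_blocksThrough_of_card_eq_sq hk hv hsz, smul_eq_mul]
  ring

end FlagTransitive

theorem smul_toFinset_orbit {Pt G : Type*} [DecidableEq Pt] [Group G] [MulAction G Pt]
    {H : Subgroup G} (y : Pt) [Fintype (orbit H y)] {g : G} (hg : g ∈ H) :
    g • (orbit H y).toFinset = (orbit H y).toFinset := by
  ext z
  rw [← inv_smul_mem_iff, Set.mem_toFinset, Set.mem_toFinset, ← orbit_eq_iff, ← orbit_eq_iff,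
    show g⁻¹ • z = (⟨g, hg⟩⁻¹ : H) • z from rfl, orbit_smul]

theorem stmt_1_general {Pt ι : Type*} [Fintype Pt] [Fintype ι] [DecidableEq Pt]
    (k lam : ℕ) (Bl : ι → Finset Pt)
    (G : Type*) [Group G] [MulAction G Pt] [MulAction G ι]
    (hk : 2 < k) (hlam : 0 < lam)
    (hv : Fintype.card Pt = k ^ 2)
    (hsz : ∀ i, (Bl i).card = k)
    (hpair : ∀ x y : Pt, x ≠ y →
      (Finset.univ.filter fun i => x ∈ Bl i ∧ y ∈ Bl i).card = lam)
    (hcompat : ∀ (g : G) (i : ι) (x : Pt), x ∈ Bl i ↔ g • x ∈ Bl (g • i))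
    (hflag : ∀ (x : Pt) (i : ι), x ∈ Bl i → ∀ (y : Pt) (j : ι), y ∈ Bl j →
      ∃ g : G, g • x = y ∧ g • i = j)
    (x : Pt) (i : ι) (hxB : x ∈ Bl i) (y : Pt) (hyx : y ≠ x) :
    (MulAction.orbit (MulAction.stabilizer G x) y).ncard =
      (k + 1) * ((Bl i : Set Pt) ∩ MulAction.orbit (MulAction.stabilizer G x) y).ncard ∧
    (k + 1) ∣ (MulAction.orbit (MulAction.stabilizer G x) y).ncard := by
  classical
  set O := orbit (stabilizer G x) y
  have hxO : x ∉ O.toFinset := by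
    rw [Set.mem_toFinset, mem_orbit_iff]
    rintro ⟨g, hg⟩
    exact hyx (((smul_eq_iff_eq_inv_smul g).mp hg).trans (g⁻¹).2)
  have hcard : O.toFinset.card = (k + 1) * (Bl i ∩ O.toFinset).card :=
    IsFlagTransitive.card_eq_succ_mul_card_inter_block (G := G) hflag hcompat hpair (by omega)
      hlam hv hsz hxO (fun _ => smul_toFinset_orbit y) hxB
  rw [← Set.coe_toFinset O, ← coe_inter, Set.ncard_coe_finset, Set.ncard_coe_finset, ← hcard]
  exact ⟨rfl, hcard ▸ dvd_mul_right _ _⟩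

/-- Let `D` be a non-trivial `2-(k², k, λ)` design with `λ ∣ k`, admitting a
flag-transitive automorphism group `G`.  Then for any point `x`, any block `B` through
`x` and any point `y ≠ x`, `|y^{G_x}| = (k+1)·|B ∩ y^{G_x}|`; in particular `k+1`
divides the length of every `G_x`-orbit on points other than `{x}`. -/
theorem stmt_1 {Pt ι : Type*} [Fintype Pt] [Fintype ι] [DecidableEq Pt]
    (k lam : ℕ) (Bl : ι → Finset Pt)
    (G : Type*) [Group G] [Finite G] [MulAction G Pt] [MulAction G ι]
    (hk : 2 < k) (hlam : 0 < lam) (hdvd : lam ∣ k)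
    (hv : Fintype.card Pt = k ^ 2)
    (hsz : ∀ i, (Bl i).card = k)
    (hpair : ∀ x y : Pt, x ≠ y →
      (Finset.univ.filter fun i => x ∈ Bl i ∧ y ∈ Bl i).card = lam)
    (hcompat : ∀ (g : G) (i : ι) (x : Pt), x ∈ Bl i ↔ g • x ∈ Bl (g • i))
    (hflag : ∀ (x : Pt) (i : ι), x ∈ Bl i → ∀ (y : Pt) (j : ι), y ∈ Bl j →
      ∃ g : G, g • x = y ∧ g • i = j)
    (x : Pt) (i : ι) (hxB : x ∈ Bl i) (y : Pt) (hyx : y ≠ x) :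
    (MulAction.orbit (MulAction.stabilizer G x) y).ncard =
      (k + 1) * ((Bl i : Set Pt) ∩ MulAction.orbit (MulAction.stabilizer G x) y).ncard ∧
    (k + 1) ∣ (MulAction.orbit (MulAction.stabilizer G x) y).ncard :=
  stmt_1_general k lam Bl G hk hlam hv hsz hpair hcompat hflag x i hxB y hyx
end

section
/- Let D be a non-trivial 2-(k², k, λ) design with λ | k, admitting a flag-transitive automorphism group G. Then |G| = k²·|G_x| for any point x, |G_x| = λ(k+1)|G_{x,B}| for any flag (x,B), and consequently |G| < |G_x|³ (i.e., G_x is a large subgroup of G). -/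
/-!
Counting the pairs `(y, B)` with `y ≠ x` and `x, y ∈ B` gives `r (k - 1) = (v - 1) λ` for the
number `r` of blocks through `x`; with `v = k²` this is `r = λ (k + 1)`. Flag-transitivity makes
`G` transitive on points and `G_x` transitive on the `r` blocks through `x`, so orbit–stabilizer
gives `|G| = k² |G_x|` and `|G_x| = λ (k + 1) |G_{x,B}|`. Hence `|G_x| ≥ k + 1`, and
`|G| = k² |G_x| < |G_x|² |G_x|`.
-/

open Finset MulAction

section Design

variable {Pt ι : Type*} [Fintype Pt] [Fintype ι] [DecidableEq Pt]

theorem card_blocks_through_mul (Bl : ι → Finset Pt) {k lam : ℕ} (hsz : ∀ i, #(Bl i) = k)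
    (hpair : ∀ x y : Pt, x ≠ y → #{i | x ∈ Bl i ∧ y ∈ Bl i} = lam) (x : Pt) :
    #{i | x ∈ Bl i} * (k - 1) = (Fintype.card Pt - 1) * lam := by
  rw [← card_univ, ← card_erase_of_mem (mem_univ x)]
  refine card_mul_eq_card_mul (fun i y => y ∈ Bl i) (fun i hi => ?_) (fun y hy => ?_)
  · rw [mem_filter] at hi
    rw [← hsz i, ← card_erase_of_mem hi.2]
    congr 1
    ext y
    simp [bipartiteAbove, and_comm]
  · rw [← hpair x y (ne_of_mem_erase hy).symm]
    congr 1
    ext i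
    simp [bipartiteBelow]

theorem card_blocks_through_of_card_eq_sq (Bl : ι → Finset Pt) {k lam : ℕ} (hk : 2 ≤ k)
    (hv : Fintype.card Pt = k ^ 2) (hsz : ∀ i, #(Bl i) = k)
    (hpair : ∀ x y : Pt, x ≠ y → #{i | x ∈ Bl i ∧ y ∈ Bl i} = lam) (x : Pt) :
    #{i | x ∈ Bl i} = lam * (k + 1) := by
  have hcount := card_blocks_through_mul Bl hsz hpair x
  have hsq : k ^ 2 - 1 = (k + 1) * (k - 1) := by simpa using Nat.sq_sub_sq k 1
  rw [hv, hsq, mul_right_comm, mul_comm (k + 1)] at hcount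
  exact Nat.eq_of_mul_eq_mul_right (by omega) hcount

theorem exists_mem_block (Bl : ι → Finset Pt) {lam : ℕ} (hlam : 0 < lam)
    (hpair : ∀ x y : Pt, x ≠ y → #{i | x ∈ Bl i ∧ y ∈ Bl i} = lam)
    (hcard : 1 < Fintype.card Pt) (y : Pt) : ∃ i, y ∈ Bl i := by
  obtain ⟨z, hz⟩ := Fintype.exists_ne_of_one_lt_card hcard y
  obtain ⟨i, hi⟩ := card_pos.mp ((hpair y z hz.symm).symm ▸ hlam)
  exact ⟨i, (mem_filter.mp hi).2.1⟩

end Design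

section FlagTransitive

variable {G Pt ι : Type*} [Group G] [MulAction G Pt] [MulAction G ι] {Bl : ι → Finset Pt}

theorem orbit_eq_univ_of_flag_transitive
    (hflag : ∀ (x : Pt) (i : ι), x ∈ Bl i → ∀ (y : Pt) (j : ι), y ∈ Bl j →
      ∃ g : G, g • x = y ∧ g • i = j)
    (hcover : ∀ y, ∃ j, y ∈ Bl j) {x : Pt} {i : ι} (hxB : x ∈ Bl i) :
    orbit G x = Set.univ := by
  refine Set.eq_univ_of_forall fun y => ?_
  obtain ⟨j, hj⟩ := hcover y
  obtain ⟨g, hgx, -⟩ := hflag x i hxB y j hj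
  exact ⟨g, hgx⟩

theorem orbit_stabilizer_eq_blocks_through
    (hcompat : ∀ (g : G) (i : ι) (x : Pt), x ∈ Bl i ↔ g • x ∈ Bl (g • i))
    (hflag : ∀ (x : Pt) (i : ι), x ∈ Bl i → ∀ (y : Pt) (j : ι), y ∈ Bl j →
      ∃ g : G, g • x = y ∧ g • i = j)
    {x : Pt} {i : ι} (hxB : x ∈ Bl i) :
    orbit (stabilizer G x) i = {j | x ∈ Bl j} := by
  ext j
  constructor
  · rintro ⟨⟨g, hg⟩, rfl⟩
    have hgx : g • x = x := hg
    simpa [hgx] using (hcompat g i x).mp hxB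
  · intro hj
    obtain ⟨g, hgx, hgi⟩ := hflag x i hxB x j hj
    exact ⟨⟨g, hgx⟩, hgi⟩

end FlagTransitive

theorem card_stabilizer_eq_ncard_orbit_mul_card_inf {G α β : Type*} [Group G] [MulAction G α]
    [MulAction G β] (x : α) (i : β) :
    Nat.card (stabilizer G x) =
      (orbit (stabilizer G x) i).ncard * Nat.card ↥(stabilizer G x ⊓ stabilizer G i) := by
  rw [← index_stabilizer, ← Subgroup.index_mul_card (stabilizer (stabilizer G x) i)]
  congr 1
  change Nat.card ((stabilizer G i).subgroupOf (stabilizer G x)) = _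
  rw [← Subgroup.inf_subgroupOf_left]
  exact Nat.card_congr (Subgroup.subgroupOfEquivOfLe inf_le_left).toEquiv

theorem sq_mul_lt_pow_three {k L : ℕ} (h : k + 1 ≤ L) : k ^ 2 * L < L ^ 3 :=
  calc k ^ 2 * L < L ^ 2 * L :=
        Nat.mul_lt_mul_of_pos_right (Nat.pow_lt_pow_left (by omega) two_ne_zero) (by omega)
    _ = L ^ 3 := by ring

theorem stmt_2_general {Pt ι : Type*} [Fintype Pt] [Fintype ι] [DecidableEq Pt]
    (k lam : ℕ) (Bl : ι → Finset Pt)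
    (G : Type*) [Group G] [Finite G] [MulAction G Pt] [MulAction G ι]
    (hk : 2 < k) (hlam : 0 < lam)
    (hv : Fintype.card Pt = k ^ 2)
    (hsz : ∀ i, (Bl i).card = k)
    (hpair : ∀ x y : Pt, x ≠ y →
      (Finset.univ.filter fun i => x ∈ Bl i ∧ y ∈ Bl i).card = lam)
    (hcompat : ∀ (g : G) (i : ι) (x : Pt), x ∈ Bl i ↔ g • x ∈ Bl (g • i))
    (hflag : ∀ (x : Pt) (i : ι), x ∈ Bl i → ∀ (y : Pt) (j : ι), y ∈ Bl j →
      ∃ g : G, g • x = y ∧ g • i = j)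
    (x : Pt) (i : ι) (hxB : x ∈ Bl i) :
    Nat.card G = k ^ 2 * Nat.card (MulAction.stabilizer G x) ∧
    Nat.card (MulAction.stabilizer G x) =
      lam * (k + 1) * Nat.card ↥(MulAction.stabilizer G x ⊓ MulAction.stabilizer G i) ∧
    Nat.card G < Nat.card (MulAction.stabilizer G x) ^ 3 := by
  have hcover := exists_mem_block Bl hlam hpair (by rw [hv]; nlinarith)
  have hG : Nat.card G = k ^ 2 * Nat.card (stabilizer G x) := by
    rw [← Subgroup.index_mul_card (stabilizer G x), index_stabilizer,
      orbit_eq_univ_of_flag_transitive hflag hcover hxB, Set.ncard_univ, Nat.card_eq_fintype_card,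
      hv]
  have hGx : Nat.card (stabilizer G x) =
      lam * (k + 1) * Nat.card ↥(stabilizer G x ⊓ stabilizer G i) := by
    rw [card_stabilizer_eq_ncard_orbit_mul_card_inf x i,
      orbit_stabilizer_eq_blocks_through hcompat hflag hxB, ← coe_filter_univ, Set.ncard_coe_finset,
      card_blocks_through_of_card_eq_sq Bl hk.le hv hsz hpair x]
  have hlarge : k + 1 ≤ Nat.card (stabilizer G x) := by
    calc k + 1 ≤ lam * (k + 1) := Nat.le_mul_of_pos_left _ hlam
      _ ≤ Nat.card (stabilizer G x) := hGx ▸ Nat.le_mul_of_pos_right _ Nat.card_pos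
  exact ⟨hG, hGx, hG ▸ sq_mul_lt_pow_three hlarge⟩

/-- Let `D` be a non-trivial `2-(k², k, λ)` design with `λ ∣ k`, admitting a
flag-transitive automorphism group `G`.  Then `|G| = k²·|G_x|` for any point `x`,
`|G_x| = λ(k+1)·|G_{x,B}|` for any flag `(x,B)`, and consequently `|G| < |G_x|³`,
i.e. `G_x` is a large subgroup of `G`. -/
theorem stmt_2 {Pt ι : Type*} [Fintype Pt] [Fintype ι] [DecidableEq Pt]
    (k lam : ℕ) (Bl : ι → Finset Pt)
    (G : Type*) [Group G] [Finite G] [MulAction G Pt] [MulAction G ι]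
    (hk : 2 < k) (hlam : 0 < lam) (hdvd : lam ∣ k)
    (hv : Fintype.card Pt = k ^ 2)
    (hsz : ∀ i, (Bl i).card = k)
    (hpair : ∀ x y : Pt, x ≠ y →
      (Finset.univ.filter fun i => x ∈ Bl i ∧ y ∈ Bl i).card = lam)
    (hcompat : ∀ (g : G) (i : ι) (x : Pt), x ∈ Bl i ↔ g • x ∈ Bl (g • i))
    (hflag : ∀ (x : Pt) (i : ι), x ∈ Bl i → ∀ (y : Pt) (j : ι), y ∈ Bl j →
      ∃ g : G, g • x = y ∧ g • i = j)
    (x : Pt) (i : ι) (hxB : x ∈ Bl i) :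
    Nat.card G = k ^ 2 * Nat.card (MulAction.stabilizer G x) ∧
    Nat.card (MulAction.stabilizer G x) =
      lam * (k + 1) * Nat.card ↥(MulAction.stabilizer G x ⊓ MulAction.stabilizer G i) ∧
    Nat.card G < Nat.card (MulAction.stabilizer G x) ^ 3 :=
  stmt_2_general k lam Bl G hk hlam hv hsz hpair hcompat hflag x i hxB
end

section
/- The only integer q > 1 for which q⁴ + q³ + q² + q + 1 is a perfect square is q = 3 (where it equals 121 = 11²). -/
/-!
Complete the square: `4 (q⁴ + q³ + q² + q + 1)` lies strictly between `(2q² + q)²` and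
`(2q² + q + 2)²` for `q > 0`, so if it equals `(2z)²` then `2z = 2q² + q + 1`. Comparing with
`(2q² + q + 1)² = 4q⁴ + 4q³ + 5q² + 2q + 1` leaves `q² = 2q + 3`, i.e. `q = 3`.
-/

theorem Nat.eq_add_one_of_sq_lt_of_lt_sq {a b : ℕ} (hlo : a ^ 2 < b ^ 2) (hhi : b ^ 2 < (a + 2) ^ 2) :
    b = a + 1 := by
  have := (Nat.pow_lt_pow_iff_left two_ne_zero).1 hlo
  have := (Nat.pow_lt_pow_iff_left two_ne_zero).1 hhi
  omega

theorem two_mul_eq_of_sq_eq_cyclotomic_five {q z : ℕ} (hq : 0 < q)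
    (hz : z ^ 2 = q ^ 4 + q ^ 3 + q ^ 2 + q + 1) : 2 * z = 2 * q ^ 2 + q + 1 := by
  have hsq : (2 * z) ^ 2 = 4 * (q ^ 4 + q ^ 3 + q ^ 2 + q + 1) := by rw [mul_pow, hz]; ring
  apply Nat.eq_add_one_of_sq_lt_of_lt_sq
  · rw [hsq]; nlinarith
  · rw [hsq]; nlinarith

theorem eq_three_of_sq_eq_cyclotomic_five {q z : ℕ} (hq : 0 < q)
    (hz : z ^ 2 = q ^ 4 + q ^ 3 + q ^ 2 + q + 1) : q = 3 := by
  have h2z := two_mul_eq_of_sq_eq_cyclotomic_five hq hz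
  have hquad : q ^ 2 = 2 * q + 3 := by
    have : (2 * q ^ 2 + q + 1) ^ 2 = 4 * (q ^ 4 + q ^ 3 + q ^ 2 + q + 1) := by
      rw [← h2z, mul_pow, hz]; ring
    nlinarith
  have hq4 : q < 4 := by nlinarith
  interval_cases q <;> omega

/-- The only integer `q > 1` for which `q⁴ + q³ + q² + q + 1` is a perfect square is
`q = 3`, where it equals `121 = 11²`. -/
theorem stmt_7 :
    (∀ q : ℕ, 1 < q → (∃ z : ℕ, z ^ 2 = q ^ 4 + q ^ 3 + q ^ 2 + q + 1) → q = 3) ∧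
    3 ^ 4 + 3 ^ 3 + 3 ^ 2 + 3 + 1 = 11 ^ 2 :=
  ⟨fun _ hq ⟨_, hz⟩ => eq_three_of_sq_eq_cyclotomic_five (by omega) hz, by norm_num⟩
end

section
/- Let G act flag-transitively on a 2-(k²,k,λ) design with λ | k and let p be a prime dividing k. Then |G|_p = λ_p·k_p²·|G_{x,B}|_p for any flag (x,B), and consequently |G|_p ≤ |G_B|_p³, where G_B is a block stabilizer. -/
/-!
Double counting pairs of points shows that a `2-(k², k, λ)` design has `b = λk(k+1)` blocks.
Flag-transitivity makes `G` transitive on the `bk` flags and on the `b` blocks, so by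
orbit–stabilizer `|G| = λk²(k+1)·|G_{x,B}|` and `|G_B| = k·|G_{x,B}|`. Since `p ∣ k`, `p` does not
divide `k + 1`, which gives the first claim; the second follows from `λ_p ≤ k_p`.
-/

open Finset MulAction

theorem Nat.factorization_succ_eq_zero_of_dvd {p k : ℕ} (hpk : p ∣ k) :
    (k + 1).factorization p = 0 := by
  by_cases hp : p.Prime
  · exact Nat.factorization_eq_zero_of_not_dvd fun h =>
      hp.one_lt.ne' (Nat.dvd_one.mp ((Nat.dvd_add_right hpk).mp h))
  · exact Nat.factorization_eq_zero_of_not_prime _ hp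

section Design

variable {Pt ι : Type*} {Bl : ι → Finset Pt}

section Counting

variable [Fintype Pt] [Fintype ι] [DecidableEq Pt] {k lam : ℕ}

theorem card_blocks_mul_eq_of_pair_count (hsz : ∀ i, (Bl i).card = k)
    (hpair : ∀ x y : Pt, x ≠ y →
      (Finset.univ.filter fun i => x ∈ Bl i ∧ y ∈ Bl i).card = lam) :
    Fintype.card ι * (k * (k - 1)) = lam * (Fintype.card Pt * (Fintype.card Pt - 1)) := by
  have hcount := sum_card_bipartiteAbove_eq_sum_card_bipartiteBelow
    (s := (univ : Finset Pt).offDiag) (t := (univ : Finset ι))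
    (fun q j => q.1 ∈ Bl j ∧ q.2 ∈ Bl j)
  have hbelow : ∀ j, (univ : Finset Pt).offDiag.bipartiteBelow
      (fun q j => q.1 ∈ Bl j ∧ q.2 ∈ Bl j) j = (Bl j).offDiag := by
    intro j
    ext q
    simp only [bipartiteBelow, mem_filter, mem_offDiag, mem_univ, true_and]
    tauto
  have habove : ∀ q ∈ (univ : Finset Pt).offDiag,
      (univ.bipartiteAbove (fun q j => q.1 ∈ Bl j ∧ q.2 ∈ Bl j) q).card = lam :=
    fun q hq => hpair q.1 q.2 (mem_offDiag.1 hq).2.2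
  rw [sum_congr rfl habove] at hcount
  simp only [hbelow, offDiag_card, hsz, sum_const, card_univ, smul_eq_mul] at hcount
  rw [Nat.mul_sub_one, Nat.mul_sub_one, mul_comm lam]
  exact hcount.symm

theorem card_blocks_eq_of_card_points_eq_sq (hk : 1 < k) (hv : Fintype.card Pt = k ^ 2)
    (hsz : ∀ i, (Bl i).card = k)
    (hpair : ∀ x y : Pt, x ≠ y →
      (Finset.univ.filter fun i => x ∈ Bl i ∧ y ∈ Bl i).card = lam) :
    Fintype.card ι = lam * (k * (k + 1)) := by
  have hcount := card_blocks_mul_eq_of_pair_count hsz hpair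
  have hsq : k ^ 2 - 1 = (k + 1) * (k - 1) := by simpa using Nat.sq_sub_sq k 1
  rw [hv, hsq] at hcount
  refine Nat.eq_of_mul_eq_mul_right (Nat.mul_pos (by omega) (by omega) : 0 < k * (k - 1)) ?_
  rw [hcount]
  ring

theorem ncard_flags (hsz : ∀ i, (Bl i).card = k) :
    {q : Pt × ι | q.1 ∈ Bl q.2}.ncard = Fintype.card ι * k := by
  calc {q : Pt × ι | q.1 ∈ Bl q.2}.ncard
      = (univ.filter fun q : Pt × ι => q.1 ∈ Bl q.2).card := by
        rw [← coe_filter_univ, Set.ncard_coe_finset]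
    _ = ∑ j : ι, ∑ y : Pt, if y ∈ Bl j then 1 else 0 := by
        rw [card_filter, Fintype.sum_prod_type_right]
    _ = ∑ j : ι, (Bl j).card := by simp
    _ = Fintype.card ι * k := by simp [hsz]

end Counting

variable {G : Type*} [Group G] [MulAction G Pt] [MulAction G ι]

theorem orbit_flag_eq (hcompat : ∀ (g : G) (i : ι) (x : Pt), x ∈ Bl i ↔ g • x ∈ Bl (g • i))
    (hflag : ∀ (x : Pt) (i : ι), x ∈ Bl i → ∀ (y : Pt) (j : ι), y ∈ Bl j →
      ∃ g : G, g • x = y ∧ g • i = j)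
    {x : Pt} {i : ι} (hxB : x ∈ Bl i) :
    orbit G (x, i) = {q : Pt × ι | q.1 ∈ Bl q.2} := by
  ext q
  refine ⟨?_, fun hq => ?_⟩
  · rintro ⟨g, rfl⟩
    exact (hcompat g i x).1 hxB
  · obtain ⟨g, hgx, hgi⟩ := hflag x i hxB q.1 q.2 hq
    exact ⟨g, Prod.ext hgx hgi⟩

theorem orbit_block_eq_univ (hne : ∀ j, (Bl j).Nonempty)
    (hflag : ∀ (x : Pt) (i : ι), x ∈ Bl i → ∀ (y : Pt) (j : ι), y ∈ Bl j →
      ∃ g : G, g • x = y ∧ g • i = j)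
    {x : Pt} {i : ι} (hxB : x ∈ Bl i) :
    orbit G i = Set.univ := by
  refine Set.eq_univ_of_forall fun j => ?_
  obtain ⟨y, hy⟩ := hne j
  obtain ⟨g, -, hgi⟩ := hflag x i hxB y j hy
  exact ⟨g, hgi⟩

theorem stabilizer_prod_eq (x : Pt) (i : ι) :
    stabilizer G (x, i) = stabilizer G x ⊓ stabilizer G i := by
  ext g
  simp [mem_stabilizer_iff, Prod.ext_iff]

theorem card_eq_card_blocks_mul_card_stabilizer [Fintype ι] (hne : ∀ j, (Bl j).Nonempty)
    (hflag : ∀ (x : Pt) (i : ι), x ∈ Bl i → ∀ (y : Pt) (j : ι), y ∈ Bl j →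
      ∃ g : G, g • x = y ∧ g • i = j)
    {x : Pt} {i : ι} (hxB : x ∈ Bl i) :
    Nat.card G = Fintype.card ι * Nat.card (stabilizer G i) := by
  rw [← Subgroup.index_mul_card, index_stabilizer G i, orbit_block_eq_univ hne hflag hxB,
    Set.ncard_univ, Nat.card_eq_fintype_card]

variable [Fintype Pt] [Fintype ι] [DecidableEq Pt] {k : ℕ}

theorem card_eq_card_blocks_mul_card_flag_stabilizer (hsz : ∀ i, (Bl i).card = k)
    (hcompat : ∀ (g : G) (i : ι) (x : Pt), x ∈ Bl i ↔ g • x ∈ Bl (g • i))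
    (hflag : ∀ (x : Pt) (i : ι), x ∈ Bl i → ∀ (y : Pt) (j : ι), y ∈ Bl j →
      ∃ g : G, g • x = y ∧ g • i = j)
    {x : Pt} {i : ι} (hxB : x ∈ Bl i) :
    Nat.card G = Fintype.card ι * k * Nat.card ↥(stabilizer G x ⊓ stabilizer G i) := by
  rw [← stabilizer_prod_eq (G := G), ← Subgroup.index_mul_card, index_stabilizer G (x, i),
    orbit_flag_eq hcompat hflag hxB, ncard_flags hsz]

end Design

theorem stmt_11_general {Pt ι : Type*} [Fintype Pt] [Fintype ι] [DecidableEq Pt]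
    (k lam : ℕ) (Bl : ι → Finset Pt)
    (G : Type*) [Group G] [Finite G] [MulAction G Pt] [MulAction G ι]
    (hk : 2 < k) (hdvd : lam ∣ k)
    (hv : Fintype.card Pt = k ^ 2)
    (hsz : ∀ i, (Bl i).card = k)
    (hpair : ∀ x y : Pt, x ≠ y →
      (Finset.univ.filter fun i => x ∈ Bl i ∧ y ∈ Bl i).card = lam)
    (hcompat : ∀ (g : G) (i : ι) (x : Pt), x ∈ Bl i ↔ g • x ∈ Bl (g • i))
    (hflag : ∀ (x : Pt) (i : ι), x ∈ Bl i → ∀ (y : Pt) (j : ι), y ∈ Bl j →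
      ∃ g : G, g • x = y ∧ g • i = j)
    (p : ℕ) (hpk : p ∣ k)
    (x : Pt) (i : ι) (hxB : x ∈ Bl i) :
    (Nat.card G).factorization p =
      lam.factorization p + 2 * k.factorization p +
        (Nat.card ↥(MulAction.stabilizer G x ⊓ MulAction.stabilizer G i)).factorization p ∧
    (Nat.card G).factorization p ≤
      3 * (Nat.card (MulAction.stabilizer G i)).factorization p := by
  have hk0 : 0 < k := by omega
  have hlam : 0 < lam := Nat.pos_of_dvd_of_pos hdvd hk0
  have hb := card_blocks_eq_of_card_points_eq_sq (by omega) hv hsz hpair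
  have hne : ∀ j, (Bl j).Nonempty := fun j => card_pos.1 (by rw [hsz j]; exact hk0)
  set S := Nat.card ↥(stabilizer G x ⊓ stabilizer G i)
  have hS : S ≠ 0 := Nat.card_pos.ne'
  have hG : Nat.card G = lam * k ^ 2 * (k + 1) * S := by
    rw [card_eq_card_blocks_mul_card_flag_stabilizer hsz hcompat hflag hxB, hb]
    ring
  have hGB : Nat.card (stabilizer G i) = k * S := by
    refine Nat.eq_of_mul_eq_mul_left (by rw [hb]; positivity : 0 < Fintype.card ι) ?_
    rw [← card_eq_card_blocks_mul_card_stabilizer hne hflag hxB,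
      card_eq_card_blocks_mul_card_flag_stabilizer hsz hcompat hflag hxB, mul_assoc]
  have hG_p : (Nat.card G).factorization p =
      lam.factorization p + 2 * k.factorization p + S.factorization p := by
    rw [hG]
    simp [Nat.factorization_mul, Nat.factorization_pow, hlam.ne', hk0.ne', hS,
      Nat.factorization_succ_eq_zero_of_dvd hpk]
  have hlam_p : lam.factorization p ≤ k.factorization p :=
    (Nat.factorization_le_iff_dvd hlam.ne' hk0.ne').2 hdvd p
  refine ⟨hG_p, ?_⟩
  rw [hG_p, hGB, Nat.factorization_mul hk0.ne' hS, Finsupp.add_apply]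
  omega

/-- Let `G` act flag-transitively on a `2-(k²,k,λ)` design with `λ ∣ k` and let `p` be a
prime dividing `k`.  Then `|G|_p = λ_p·k_p²·|G_{x,B}|_p` for any flag `(x,B)`, and
consequently `|G|_p ≤ |G_B|_p³` (stated via `p`-adic valuations). -/
theorem stmt_11 {Pt ι : Type*} [Fintype Pt] [Fintype ι] [DecidableEq Pt]
    (k lam : ℕ) (Bl : ι → Finset Pt)
    (G : Type*) [Group G] [Finite G] [MulAction G Pt] [MulAction G ι]
    (hk : 2 < k) (hlam : 0 < lam) (hdvd : lam ∣ k)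
    (hv : Fintype.card Pt = k ^ 2)
    (hsz : ∀ i, (Bl i).card = k)
    (hpair : ∀ x y : Pt, x ≠ y →
      (Finset.univ.filter fun i => x ∈ Bl i ∧ y ∈ Bl i).card = lam)
    (hcompat : ∀ (g : G) (i : ι) (x : Pt), x ∈ Bl i ↔ g • x ∈ Bl (g • i))
    (hflag : ∀ (x : Pt) (i : ι), x ∈ Bl i → ∀ (y : Pt) (j : ι), y ∈ Bl j →
      ∃ g : G, g • x = y ∧ g • i = j)
    (p : ℕ) (hp : p.Prime) (hpk : p ∣ k)
    (x : Pt) (i : ι) (hxB : x ∈ Bl i) :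
    (Nat.card G).factorization p =
      lam.factorization p + 2 * k.factorization p +
        (Nat.card ↥(MulAction.stabilizer G x ⊓ MulAction.stabilizer G i)).factorization p ∧
    (Nat.card G).factorization p ≤
      3 * (Nat.card (MulAction.stabilizer G i)).factorization p :=
  stmt_11_general k lam Bl G hk hdvd hv hsz hpair hcompat hflag p hpk x i hxB
end

section
/- Let G act flag-transitively on a 2-(k²,k,λ) design with λ | k, where λ|G_{x,B}| is odd for some flag (x,B). Then k is even. -/
/-!
Take an involution `σ ∈ G` and a point `y` it moves. The `λ` blocks through `{y, σ y}` are
permuted by `σ`, and `λ` is odd, so `σ` fixes one of them, `C`. Flag-transitivity makes the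
stabilizer `G_C` transitive on the `k` points of `C`, so `|G_C| = k · |G_{y,C}|`; the flag
stabilizer `G_{y,C}` is conjugate to `G_{x,B}` and has odd order, while `2 ∣ |G_C|` since
`σ ∈ G_C`. Hence `2 ∣ k`.
-/

open MulAction

theorem Finset.exists_fixed_of_involution_of_odd_card {α : Type*} {s : Finset α} {f : α → α}
    (hmaps : ∀ a ∈ s, f a ∈ s) (hinv : ∀ a ∈ s, f (f a) = a) (hodd : Odd s.card) :
    ∃ a ∈ s, f a = a := by
  by_contra! hfree
  -- pairing `a` with `f a` gives `∏ a ∈ s, (-1) = 1`, whereas it is `(-1) ^ #s = -1`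
  have hprod := Finset.prod_involution (s := s) (f := fun _ => (-1 : ℤ))
    (fun a _ => f a) (by simp) (fun a ha _ => hfree a ha) hmaps hinv
  rw [Finset.prod_const, hodd.neg_one_pow] at hprod
  norm_num at hprod

theorem exists_smul_ne_of_ne_one {G α : Type*} [Group G] [MulAction G α] [FaithfulSMul G α]
    {g : G} (hg : g ≠ 1) : ∃ a : α, g • a ≠ a := by
  by_contra! hfix
  exact hg (FaithfulSMul.eq_of_smul_eq_smul fun a => by rw [hfix a, one_smul])

theorem MulAction.card_stabilizer_inf_stabilizer_smul {G α β : Type*} [Group G]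
    [MulAction G α] [MulAction G β] (g : G) (a : α) (b : β) :
    Nat.card ↥(stabilizer G (g • a) ⊓ stabilizer G (g • b)) =
      Nat.card ↥(stabilizer G a ⊓ stabilizer G b) := by
  rw [stabilizer_smul_eq_stabilizer_map_conj, stabilizer_smul_eq_stabilizer_map_conj,
    ← Subgroup.map_inf _ _ _ (MulAut.conj g).injective]
  exact Nat.card_congr (Subgroup.equivMapOfInjective _ _ (MulAut.conj g).injective).toEquiv.symm

section FlagTransitive

variable {G Pt ι : Type*} [Group G] [MulAction G Pt] [MulAction G ι] {Bl : ι → Finset Pt}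

theorem orbit_stabilizer_eq_block
    (hcompat : ∀ (g : G) (i : ι) (x : Pt), x ∈ Bl i ↔ g • x ∈ Bl (g • i))
    (hflag : ∀ (x : Pt) (i : ι), x ∈ Bl i → ∀ (y : Pt) (j : ι), y ∈ Bl j →
      ∃ g : G, g • x = y ∧ g • i = j)
    {y : Pt} {C : ι} (hy : y ∈ Bl C) :
    orbit (stabilizer G C) y = Bl C := by
  ext z
  constructor
  · rintro ⟨⟨g, hg⟩, rfl⟩
    simpa [show g • C = C from hg] using (hcompat g C y).mp hy
  · intro hz
    obtain ⟨g, hgy, hgC⟩ := hflag y C hy z C hz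
    exact ⟨⟨g, hgC⟩, hgy⟩

theorem card_stabilizer_block_eq
    (hcompat : ∀ (g : G) (i : ι) (x : Pt), x ∈ Bl i ↔ g • x ∈ Bl (g • i))
    (hflag : ∀ (x : Pt) (i : ι), x ∈ Bl i → ∀ (y : Pt) (j : ι), y ∈ Bl j →
      ∃ g : G, g • x = y ∧ g • i = j)
    {y : Pt} {C : ι} (hy : y ∈ Bl C) :
    Nat.card (stabilizer G C) = (Bl C).card * Nat.card ↥(stabilizer G y ⊓ stabilizer G C) := by
  have hrel : (stabilizer G y).relIndex (stabilizer G C) = (Bl C).card := by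
    rw [Subgroup.relIndex, show (stabilizer G y).subgroupOf (stabilizer G C) =
      stabilizer (stabilizer G C) y from rfl, index_stabilizer,
      orbit_stabilizer_eq_block hcompat hflag hy, Set.ncard_coe_finset]
  have := Subgroup.relIndex_inf_mul_relIndex ⊥ (stabilizer G y) (stabilizer G C)
  rwa [bot_inf_eq, Subgroup.relIndex_bot_left, Subgroup.relIndex_bot_left, hrel, mul_comm,
    eq_comm] at this

theorem exists_fixed_block_of_odd_card [Fintype ι] [DecidableEq Pt]
    (hcompat : ∀ (g : G) (i : ι) (x : Pt), x ∈ Bl i ↔ g • x ∈ Bl (g • i))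
    {σ : G} (hσ : σ ^ 2 = 1) (y : Pt)
    (hodd : Odd (Finset.univ.filter fun j => y ∈ Bl j ∧ σ • y ∈ Bl j).card) :
    ∃ C, y ∈ Bl C ∧ σ • C = C := by
  have hσσ (j : ι) : σ • σ • j = j := by rw [smul_smul, ← sq, hσ, one_smul]
  have hmaps : ∀ j ∈ Finset.univ.filter (fun j => y ∈ Bl j ∧ σ • y ∈ Bl j),
      σ • j ∈ Finset.univ.filter (fun j => y ∈ Bl j ∧ σ • y ∈ Bl j) := by
    intro j hj
    obtain ⟨-, hyj, hσyj⟩ := Finset.mem_filter.mp hj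
    refine Finset.mem_filter.mpr ⟨Finset.mem_univ _, ?_, (hcompat σ j y).mp hyj⟩
    simpa [smul_smul, ← sq, hσ] using (hcompat σ j (σ • y)).mp hσyj
  obtain ⟨C, hC, hσC⟩ :=
    Finset.exists_fixed_of_involution_of_odd_card hmaps (fun j _ => hσσ j) hodd
  exact ⟨C, (Finset.mem_filter.mp hC).2.1, hσC⟩

end FlagTransitive

theorem stmt_13_general {Pt ι : Type*} [Fintype ι] [DecidableEq Pt]
    (k lam : ℕ) (Bl : ι → Finset Pt)
    (G : Type*) [Group G] [Finite G] [MulAction G Pt] [MulAction G ι]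
    [FaithfulSMul G Pt]
    (hsz : ∀ i, (Bl i).card = k)
    (hpair : ∀ x y : Pt, x ≠ y →
      (Finset.univ.filter fun i => x ∈ Bl i ∧ y ∈ Bl i).card = lam)
    (hcompat : ∀ (g : G) (i : ι) (x : Pt), x ∈ Bl i ↔ g • x ∈ Bl (g • i))
    (hflag : ∀ (x : Pt) (i : ι), x ∈ Bl i → ∀ (y : Pt) (j : ι), y ∈ Bl j →
      ∃ g : G, g • x = y ∧ g • i = j)
    (heven : Even (Nat.card G))
    (x : Pt) (i : ι) (hxB : x ∈ Bl i)
    (hodd : Odd (lam *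
      Nat.card ↥(MulAction.stabilizer G x ⊓ MulAction.stabilizer G i))) :
    Even k := by
  obtain ⟨hlam, hflag_stab⟩ := Nat.odd_mul.mp hodd
  obtain ⟨σ, hσ⟩ := exists_prime_orderOf_dvd_card' 2 heven.two_dvd
  obtain ⟨hσsq, hσ1⟩ := orderOf_eq_prime_iff.mp hσ
  obtain ⟨y, hy⟩ := exists_smul_ne_of_ne_one (α := Pt) hσ1
  obtain ⟨C, hyC, hσC⟩ :=
    exists_fixed_block_of_odd_card hcompat hσsq y (hpair y (σ • y) hy.symm ▸ hlam)
  obtain ⟨g, hgx, hgi⟩ := hflag x i hxB y C hyC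
  have hstab : Odd (Nat.card ↥(stabilizer G y ⊓ stabilizer G C)) := by
    rwa [← hgx, ← hgi, card_stabilizer_inf_stabilizer_smul]
  have h2 : 2 ∣ Nat.card (stabilizer G C) := hσ ▸ Subgroup.orderOf_dvd_natCard _ hσC
  rw [card_stabilizer_block_eq hcompat hflag hyC, hsz] at h2
  exact even_iff_two_dvd.mpr (hstab.coprime_two_right.symm.dvd_of_dvd_mul_right h2)

/-- Let `G` act (faithfully) flag-transitively on a `2-(k²,k,λ)` design with `λ ∣ k`,
where `G` has even order and `λ·|G_{x,B}|` is odd for some flag `(x,B)`.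
Then `k` is even. -/
theorem stmt_13 {Pt ι : Type*} [Fintype Pt] [Fintype ι] [DecidableEq Pt]
    (k lam : ℕ) (Bl : ι → Finset Pt)
    (G : Type*) [Group G] [Finite G] [MulAction G Pt] [MulAction G ι]
    [FaithfulSMul G Pt]
    (hk : 2 < k) (hlam : 0 < lam) (hdvd : lam ∣ k)
    (hv : Fintype.card Pt = k ^ 2)
    (hsz : ∀ i, (Bl i).card = k)
    (hpair : ∀ x y : Pt, x ≠ y →
      (Finset.univ.filter fun i => x ∈ Bl i ∧ y ∈ Bl i).card = lam)
    (hcompat : ∀ (g : G) (i : ι) (x : Pt), x ∈ Bl i ↔ g • x ∈ Bl (g • i))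
    (hflag : ∀ (x : Pt) (i : ι), x ∈ Bl i → ∀ (y : Pt) (j : ι), y ∈ Bl j →
      ∃ g : G, g • x = y ∧ g • i = j)
    (heven : Even (Nat.card G))
    (x : Pt) (i : ι) (hxB : x ∈ Bl i)
    (hodd : Odd (lam *
      Nat.card ↥(MulAction.stabilizer G x ⊓ MulAction.stabilizer G i))) :
    Even k :=
  stmt_13_general k lam Bl G hsz hpair hcompat hflag heven x i hxB hodd
end

section
/- Let P = ⟨η, ψ⟩ ≤ PSL₃(3) where η and ψ are the images of the matrices ((1,1,−1),(0,1,1),(1,1,0)) and ((1,1,−1),(0,1,−1),(0,0,1)) over GF(3). Then P is a Frobenius group of order 39 with kernel ⟨η⟩ of order 13 and complement ⟨ψ⟩ of order 3. -/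
/-- `PSL₃(3) = SL₃(3)`, since `gcd(3, 3−1) = 1`. -/
abbrev G3 := Matrix.SpecialLinearGroup (Fin 3) (ZMod 3)

/-- The element `η` of `PSL₃(3)`. -/
def etaM : G3 := ⟨!![1,1,-1;0,1,1;1,1,0], by decide⟩

/-- The element `ψ` of `PSL₃(3)`. -/
def psiM : G3 := ⟨!![1,1,-1;0,1,-1;0,0,1], by decide⟩

/-!
`ψ η ψ⁻¹ = η³`, so `ψ` normalizes `⟨η⟩` and `P = ⟨η⟩⟨ψ⟩`. Since `η` and `ψ` have the coprime
prime orders `13` and `3`, the two cyclic subgroups meet trivially and `|P| = 39`. Every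
nontrivial element of either subgroup generates it, so a commuting pair of nontrivial elements
would force `η` and `ψ` to commute, which they do not.
-/

open Subgroup
open scoped Pointwise

section GroupTheory

variable {G : Type*} [Group G]

theorem mem_zpowers_of_mem_zpowers_of_prime_orderOf {a x : G} (ha : (orderOf a).Prime)
    (hx : x ∈ zpowers a) (hx1 : x ≠ 1) : a ∈ zpowers x := by
  have : Finite (zpowers a) := (orderOf_pos_iff.1 ha.pos).finite_zpowers
  have hord : orderOf x = orderOf a :=
    (ha.eq_one_or_self_of_dvd _ (orderOf_dvd_of_mem_zpowers hx)).resolve_left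
      (orderOf_eq_one_iff.not.2 hx1)
  have hle : zpowers x ≤ zpowers a := zpowers_le.2 hx
  rw [eq_of_le_of_card_ge hle (by rw [Nat.card_zpowers, Nat.card_zpowers, hord])]
  exact mem_zpowers a

theorem commute_of_commute_mem_zpowers {a b x y : G} (ha : (orderOf a).Prime)
    (hb : (orderOf b).Prime) (hx : x ∈ zpowers a) (hx1 : x ≠ 1) (hy : y ∈ zpowers b)
    (hy1 : y ≠ 1) (hxy : Commute x y) : Commute a b := by
  obtain ⟨k, rfl⟩ := mem_zpowers_iff.1 (mem_zpowers_of_mem_zpowers_of_prime_orderOf ha hx hx1)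
  obtain ⟨m, rfl⟩ := mem_zpowers_iff.1 (mem_zpowers_of_mem_zpowers_of_prime_orderOf hb hy hy1)
  exact (hxy.zpow_left k).zpow_right m

theorem mem_normalizer_zpowers_of_conj_mem {a g : G} (ha : IsOfFinOrder a)
    (h : g * a * g⁻¹ ∈ zpowers a) : g ∈ normalizer (zpowers a : Set G) :=
  have : Finite (zpowers a) := ha.finite_zpowers
  mem_normalizer_fintype fun _ ⟨k, hk⟩ => hk ▸ conj_zpow (a := g) ▸ zpow_mem h k

theorem card_sup_of_le_normalizer_of_coprime [Finite G] {N H : Subgroup G}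
    (hLE : H ≤ normalizer (N : Set G)) (hcop : (Nat.card N).Coprime (Nat.card H)) :
    Nat.card (N ⊔ H : Subgroup G) = Nat.card N * Nat.card H := by
  apply le_antisymm
  · calc Nat.card (N ⊔ H : Subgroup G) = Nat.card ((N : Set G) * (H : Set G)) := by
          rw [← coe_mul_of_right_le_normalizer_left N H hLE]; rfl
      _ ≤ Nat.card N * Nat.card H := Set.natCard_mul_le
  · exact Nat.le_of_dvd Nat.card_pos <| hcop.mul_dvd_of_dvd_of_dvd
      (card_dvd_of_le le_sup_left) (card_dvd_of_le le_sup_right)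

end GroupTheory

theorem orderOf_etaM : orderOf etaM = 13 :=
  have : Fact (Nat.Prime 13) := ⟨by norm_num⟩
  orderOf_eq_prime (by decide) (by decide)

theorem orderOf_psiM : orderOf psiM = 3 :=
  orderOf_eq_prime (by decide) (by decide)

theorem psiM_mul_etaM_mul_inv : psiM * etaM * psiM⁻¹ = etaM ^ 3 := by decide

theorem psiM_mul_etaM_ne : psiM * etaM ≠ etaM * psiM := by decide

theorem card_zpowers_etaM : Nat.card (zpowers etaM) = 13 := by
  rw [Nat.card_zpowers, orderOf_etaM]

theorem card_zpowers_psiM : Nat.card (zpowers psiM) = 3 := by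
  rw [Nat.card_zpowers, orderOf_psiM]

theorem psiM_mem_normalizer : psiM ∈ normalizer (zpowers etaM : Set G3) :=
  mem_normalizer_zpowers_of_conj_mem (isOfFinOrder_of_finite etaM)
    (psiM_mul_etaM_mul_inv ▸ npow_mem_zpowers etaM 3)

theorem closure_pair_le_normalizer :
    Subgroup.closure {etaM, psiM} ≤ normalizer (zpowers etaM : Set G3) := by
  rw [closure_le]
  rintro x (rfl | rfl)
  exacts [le_normalizer (mem_zpowers etaM), psiM_mem_normalizer]

/-- `P = ⟨η, ψ⟩ ≤ PSL₃(3)` is a Frobenius group of order `39` with kernel `⟨η⟩` of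
order `13` and complement `⟨ψ⟩` of order `3`: `⟨η⟩` is normal in `P`, `P` is the
(inner) semidirect product `⟨η⟩ ⋊ ⟨ψ⟩`, and `⟨ψ⟩` acts fixed-point-freely on
`⟨η⟩ \ {1}`. -/
theorem stmt_16 :
    Nat.card (Subgroup.closure {etaM, psiM} : Subgroup G3) = 39 ∧
    Nat.card (Subgroup.closure {etaM} : Subgroup G3) = 13 ∧
    Nat.card (Subgroup.closure {psiM} : Subgroup G3) = 3 ∧
    (∀ g ∈ Subgroup.closure {etaM, psiM}, ∀ x ∈ Subgroup.closure {etaM},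
      g * x * g⁻¹ ∈ (Subgroup.closure {etaM} : Subgroup G3)) ∧
    Subgroup.closure {etaM} ⊔ Subgroup.closure {psiM} =
      (Subgroup.closure {etaM, psiM} : Subgroup G3) ∧
    Subgroup.closure {etaM} ⊓ Subgroup.closure {psiM} = (⊥ : Subgroup G3) ∧
    (∀ h ∈ (Subgroup.closure {psiM} : Subgroup G3), h ≠ 1 →
      ∀ x ∈ (Subgroup.closure {etaM} : Subgroup G3), x ≠ 1 → h * x ≠ x * h) := by
  have hsup : Subgroup.closure {etaM} ⊔ Subgroup.closure {psiM} =
      (Subgroup.closure {etaM, psiM} : Subgroup G3) := by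
    rw [← Subgroup.closure_union, Set.singleton_union]
  simp only [← zpowers_eq_closure] at hsup ⊢
  have hcop : (Nat.card (zpowers etaM)).Coprime (Nat.card (zpowers psiM)) := by
    rw [card_zpowers_etaM, card_zpowers_psiM]; norm_num
  refine ⟨?_, card_zpowers_etaM, card_zpowers_psiM,
    fun g hg x hx => (mem_normalizer_iff.1 (closure_pair_le_normalizer hg) x).1 hx, hsup,
    (disjoint_of_coprime_natCard hcop).eq_bot, ?_⟩
  · rw [← hsup, card_sup_of_le_normalizer_of_coprime
      (zpowers_le.2 psiM_mem_normalizer) hcop, card_zpowers_etaM, card_zpowers_psiM]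
  · intro h hh hh1 x hx hx1 hhx
    exact psiM_mul_etaM_ne (commute_of_commute_mem_zpowers (by rw [orderOf_psiM]; norm_num)
      (by rw [orderOf_etaM]; norm_num) hh hh1 hx hx1 hhx)
end
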